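/- Let σ : Y^M → S be I-unambiguous and M-unambiguous for some I ∈ [M], with |Y| = c. Then for any classifier f, R^{01}(f) ≤ min{ (R^{01}_P(f;σ) c^{2I−2} / (1 − (c^{2M−2} R^{01}_P(f;σ))^{1/M})^{M−I})^{1/I}, (c^{2M−2} R^{01}_P(f;σ))^{1/M} }, whenever the inner expression is well-defined; hence R^{01}(f) = O(R^{01}_P(f;σ)^{1/I}) as the partial risk tends to 0. -/

import Mathlib

/-!
Both bounds only involve the joint law `q` of (gold label, prediction). Fix a nonempty set `T` of
positions. For a confusion pair `l ≠ l'`, the event "every position in `T` has label `l` and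
prediction `l'`, every other position is predicted correctly" has probability
`q (l, l') ^ #T * (1 - R⁰¹) ^ (M - #T)`. Distinct pairs give disjoint events, and unambiguity of
`σ` on `T` puts each of them inside the event `σ (predictions) ≠ σ (labels)`, so their sum is at
most the partial risk. The power-mean inequality `R⁰¹ ^ n ≤ (c ^ 2) ^ (n - 1) * ∑ q (l, l') ^ n`
then gives `R⁰¹ ^ M ≤ c ^ (2M - 2) * R_P` for `T = univ`, and
`R⁰¹ ^ I * (1 - R⁰¹) ^ (M - I) ≤ c ^ (2I - 2) * R_P` for the `I` distinguished positions; the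
first bound controls the factor `1 - R⁰¹` in the second.
-/

open scoped ENNReal
open Finset

theorem ENNReal.pow_sum_le_card_pow_mul_sum_pow {ι : Type*} (s : Finset ι) (f : ι → ℝ≥0∞)
    {n : ℕ} (hn : 1 ≤ n) : (∑ i ∈ s, f i) ^ n ≤ (#s : ℝ≥0∞) ^ (n - 1) * ∑ i ∈ s, f i ^ n := by
  have h := ENNReal.rpow_sum_le_const_mul_sum_rpow s f (p := n) (by exact_mod_cast hn)
  rw [← Nat.cast_pred hn] at h
  simpa only [ENNReal.rpow_natCast] using h

theorem ENNReal.tsum_fin_pi_prod {α : Type*} : ∀ {n : ℕ} (g : Fin n → α → ℝ≥0∞),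
    ∑' w : Fin n → α, ∏ i, g i (w i) = ∏ i, ∑' a, g i a
  | 0, g => by simp
  | n + 1, g => by
    rw [← (Fin.consEquiv fun _ => α).tsum_eq, ENNReal.tsum_prod', Fin.prod_univ_succ,
      ← ENNReal.tsum_fin_pi_prod, ← ENNReal.tsum_mul_right]
    simp [Fin.consEquiv, Fin.prod_univ_succ, ENNReal.tsum_mul_left]

namespace PMF

variable {α β : Type*}

noncomputable def iid (D : PMF α) (n : ℕ) : PMF (Fin n → α) :=
  ⟨fun w => ∏ i, D (w i), by simp [ENNReal.summable.hasSum_iff, ENNReal.tsum_fin_pi_prod]⟩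

theorem iid_apply (D : PMF α) (n : ℕ) (w : Fin n → α) : D.iid n w = ∏ i, D (w i) := rfl

theorem toOuterMeasure_iid_pi (D : PMF α) {n : ℕ} (A : Fin n → Set α) :
    (D.iid n).toOuterMeasure (Set.univ.pi A) = ∏ i, D.toOuterMeasure (A i) := by
  classical
  simp only [toOuterMeasure_apply, ← ENNReal.tsum_fin_pi_prod, Set.indicator_apply,
    Set.mem_univ_pi, iid_apply, Fintype.prod_ite_zero]
  exact tsum_congr fun _ => by congr!

theorem iid_map (D : PMF α) (g : α → β) (n : ℕ) :
    (D.iid n).map (fun w i => g (w i)) = (D.map g).iid n := by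
  classical
  ext v
  simp only [map_apply, iid_apply, ← ENNReal.tsum_fin_pi_prod, Fintype.prod_ite_zero, funext_iff]
  exact tsum_congr fun _ => by congr!

theorem toOuterMeasure_add_compl (p : PMF α) (s : Set α) :
    p.toOuterMeasure s + p.toOuterMeasure sᶜ = 1 := by
  rw [toOuterMeasure_apply, toOuterMeasure_apply, ← ENNReal.tsum_add]
  simp

theorem sum_toOuterMeasure_le {ι : Type*} (p : PMF α) {s : Finset ι} {t : ι → Set α}
    {u : Set α} (hd : (s : Set ι).PairwiseDisjoint t) (hsub : ∀ i ∈ s, t i ⊆ u) :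
    ∑ i ∈ s, p.toOuterMeasure (t i) ≤ p.toOuterMeasure u := by
  simp only [toOuterMeasure_apply]
  rw [← Summable.tsum_finsetSum fun _ _ => ENNReal.summable]
  refine ENNReal.tsum_le_tsum fun a => ?_
  rw [← Finset.indicator_biUnion_apply s t hd]
  exact Set.indicator_le_indicator_of_subset (Set.iUnion₂_subset hsub) (fun _ => zero_le) a

end PMF

section PartialLabel

variable {X Y S : Type*} {M : ℕ}

noncomputable def labelPrediction (D : PMF (X × Y)) (f : X → Y) : PMF (Y × Y) :=
  D.map fun z => (z.2, f z.1)

noncomputable def zeroOneRisk (q : PMF (Y × Y)) : ℝ≥0∞ := q.toOuterMeasure {p | p.1 ≠ p.2}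

noncomputable def partialRisk (q : PMF (Y × Y)) (σ : (Fin M → Y) → S) : ℝ≥0∞ :=
  (q.iid M).toOuterMeasure {v | σ (fun i => (v i).2) ≠ σ (fun i => (v i).1)}

theorem zeroOneRisk_eq_sum_offDiag [Fintype Y] [DecidableEq Y] (q : PMF (Y × Y)) :
    zeroOneRisk q = ∑ p ∈ univ.offDiag, q p := by
  rw [zeroOneRisk, ← PMF.toOuterMeasure_apply_finset]
  congr
  ext p
  simp

theorem toOuterMeasure_diag_eq_one_sub_zeroOneRisk (q : PMF (Y × Y)) :
    q.toOuterMeasure {p | p.1 = p.2} = 1 - zeroOneRisk q := by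
  have h := q.toOuterMeasure_add_compl {p : Y × Y | p.1 ≠ p.2}
  simp only [Set.compl_ofPred, not_not] at h
  rw [add_comm] at h
  rw [zeroOneRisk]
  exact ENNReal.eq_sub_of_add_eq (ne_top_of_le_ne_top ENNReal.one_ne_top (h ▸ le_add_self)) h

theorem zeroOneRisk_pow_le [Fintype Y] [DecidableEq Y] (q : PMF (Y × Y)) {n : ℕ} (hn : 1 ≤ n) :
    zeroOneRisk q ^ n ≤ (Fintype.card Y : ℝ≥0∞) ^ (2 * n - 2) * ∑ p ∈ univ.offDiag, q p ^ n := by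
  have hcard : (#(univ : Finset Y).offDiag : ℝ≥0∞) ≤ (Fintype.card Y : ℝ≥0∞) ^ 2 := by
    rw [offDiag_card, card_univ]
    exact_mod_cast (Nat.sub_le _ _).trans (sq _).ge
  calc zeroOneRisk q ^ n
      ≤ (#(univ : Finset Y).offDiag : ℝ≥0∞) ^ (n - 1) * ∑ p ∈ univ.offDiag, q p ^ n := by
        rw [zeroOneRisk_eq_sum_offDiag]
        exact ENNReal.pow_sum_le_card_pow_mul_sum_pow _ _ hn
    _ ≤ ((Fintype.card Y : ℝ≥0∞) ^ 2) ^ (n - 1) * ∑ p ∈ univ.offDiag, q p ^ n := by gcongr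
    _ = (Fintype.card Y : ℝ≥0∞) ^ (2 * n - 2) * ∑ p ∈ univ.offDiag, q p ^ n := by
        rw [← pow_mul, Nat.mul_sub_one]

theorem sum_pow_mul_pow_le_partialRisk [Fintype Y] [DecidableEq Y] (q : PMF (Y × Y))
    (σ : (Fin M → Y) → S) {T : Finset (Fin M)} (hT : T.Nonempty)
    (hσ : ∀ (v : Fin M → Y × Y) (l l' : Y), l ≠ l' → (∀ i ∈ T, v i = (l, l')) →
      (∀ i ∉ T, (v i).1 = (v i).2) → σ (fun i => (v i).2) ≠ σ (fun i => (v i).1)) :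
    ∑ p ∈ univ.offDiag, q p ^ #T * (1 - zeroOneRisk q) ^ (M - #T) ≤ partialRisk q σ := by
  let pattern (p : Y × Y) : Set (Fin M → Y × Y) :=
    Set.univ.pi fun i => if i ∈ T then {p} else {p | p.1 = p.2}
  have hmem {p : Y × Y} {v : Fin M → Y × Y} (hv : v ∈ pattern p) :
      (∀ i ∈ T, v i = p) ∧ ∀ i ∉ T, (v i).1 = (v i).2 :=
    ⟨fun i hi => by simpa [hi] using hv i trivial, fun i hi => by simpa [hi] using hv i trivial⟩
  have hmass (p : Y × Y) : (q.iid M).toOuterMeasure (pattern p)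
      = q p ^ #T * (1 - zeroOneRisk q) ^ (M - #T) := by
    rw [PMF.toOuterMeasure_iid_pi, prod_apply_ite, prod_const, prod_const,
      PMF.toOuterMeasure_apply_singleton, toOuterMeasure_diag_eq_one_sub_zeroOneRisk]
    simp only [filter_mem_eq_of_subset (subset_univ T), filter_not, card_sdiff, card_univ,
      Fintype.card_fin, inter_univ]
  have hdisj : ((univ.offDiag : Finset (Y × Y)) : Set (Y × Y)).PairwiseDisjoint pattern := by
    obtain ⟨i, hi⟩ := hT
    intro p _ p' _ hne
    exact Set.disjoint_left.2 fun v hv hv' =>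
      hne (((hmem hv).1 i hi).symm.trans ((hmem hv').1 i hi))
  have hsub : ∀ p ∈ univ.offDiag, pattern p ⊆ {v | σ (fun i => (v i).2) ≠ σ (fun i => (v i).1)} :=
    fun p hp v hv => hσ v p.1 p.2 (by simpa using hp) (hmem hv).1 (hmem hv).2
  rw [partialRisk]
  simpa only [hmass] using PMF.sum_toOuterMeasure_le (q.iid M) hdisj hsub

theorem zeroOneRisk_pow_le_partialRisk [Fintype Y] [DecidableEq Y] (q : PMF (Y × Y))
    (σ : (Fin M → Y) → S) (hM : 1 ≤ M)
    (hσ : ∀ y y' : Y, y ≠ y' → σ (fun _ => y) ≠ σ (fun _ => y')) :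
    zeroOneRisk q ^ M ≤ (Fintype.card Y : ℝ≥0∞) ^ (2 * M - 2) * partialRisk q σ := by
  have h := sum_pow_mul_pow_le_partialRisk q σ (univ_nonempty_iff.2 ⟨⟨0, hM⟩⟩)
    fun v l l' hll' hv _ => by simpa only [hv _ (mem_univ _)] using hσ l' l hll'.symm
  rw [card_univ, Fintype.card_fin, Nat.sub_self] at h
  simp only [pow_zero, mul_one] at h
  exact (zeroOneRisk_pow_le q hM).trans (by gcongr)

theorem zeroOneRisk_pow_mul_le_partialRisk [Fintype Y] [DecidableEq Y] (q : PMF (Y × Y))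
    (σ : (Fin M → Y) → S) {I : ℕ} (hI : 1 ≤ I)
    (hσ : ∃ T : Finset (Fin M), #T = I ∧
      ∀ (y : Fin M → Y) (l l' : Y), (∀ i ∈ T, y i = l) → l' ≠ l →
        σ (fun i => if i ∈ T then l' else y i) ≠ σ y) :
    zeroOneRisk q ^ I * (1 - zeroOneRisk q) ^ (M - I)
      ≤ (Fintype.card Y : ℝ≥0∞) ^ (2 * I - 2) * partialRisk q σ := by
  obtain ⟨T, rfl, hflip⟩ := hσ
  have h := sum_pow_mul_pow_le_partialRisk q σ (card_pos.1 hI) fun v l l' hll' hT hTc => by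
    have hpred : (fun i => (v i).2) = fun i => if i ∈ T then l' else (v i).1 := by
      funext i
      by_cases hi : i ∈ T
      · simp [hi, hT i hi]
      · simp [hi, hTc i hi]
    rw [hpred]
    exact hflip _ l l' (fun i hi => by simp [hT i hi]) hll'.symm
  calc zeroOneRisk q ^ #T * (1 - zeroOneRisk q) ^ (M - #T)
      ≤ ((Fintype.card Y : ℝ≥0∞) ^ (2 * #T - 2) * ∑ p ∈ univ.offDiag, q p ^ #T)
          * (1 - zeroOneRisk q) ^ (M - #T) := by
        gcongr
        exact zeroOneRisk_pow_le q hI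
    _ = (Fintype.card Y : ℝ≥0∞) ^ (2 * #T - 2)
          * ∑ p ∈ univ.offDiag, q p ^ #T * (1 - zeroOneRisk q) ^ (M - #T) := by
        rw [mul_assoc, sum_mul]
    _ ≤ _ := by gcongr

theorem zeroOneRisk_labelPrediction [DecidableEq Y] (D : PMF (X × Y)) (f : X → Y) :
    zeroOneRisk (labelPrediction D f) = ∑' z : X × Y, if f z.1 ≠ z.2 then D z else 0 := by
  rw [zeroOneRisk, labelPrediction, PMF.toOuterMeasure_map_apply, PMF.toOuterMeasure_apply]
  exact tsum_congr fun z => by simp [Set.indicator_apply, ne_comm]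

theorem partialRisk_labelPrediction [DecidableEq S] (D : PMF (X × Y)) (f : X → Y)
    (σ : (Fin M → Y) → S) :
    partialRisk (labelPrediction D f) σ = ∑' w : Fin M → X × Y,
      (∏ i, D (w i)) * (if σ (fun i => f (w i).1) ≠ σ (fun i => (w i).2) then 1 else 0) := by
  rw [partialRisk, labelPrediction, ← PMF.iid_map, PMF.toOuterMeasure_map_apply,
    PMF.toOuterMeasure_apply]
  exact tsum_congr fun w => by simp [Set.indicator_apply, PMF.iid_apply]

end PartialLabel

theorem stmt4_general {X Y S : Type*} [Fintype Y] [DecidableEq Y] [DecidableEq S]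
    (c M I : ℕ) (hc : Fintype.card Y = c) (hM : 1 ≤ M) (hI : 1 ≤ I)
    (σ : (Fin M → Y) → S)
    (hσM : ∀ y y' : Y, y ≠ y' → σ (fun _ => y) ≠ σ (fun _ => y'))
    (hσI : ∃ Isub : Finset (Fin M), Isub.card = I ∧
      ∀ (y : Fin M → Y) (l l' : Y), (∀ i ∈ Isub, y i = l) → l' ≠ l →
        σ (fun i => if i ∈ Isub then l' else y i) ≠ σ y)
    (D : PMF (X × Y)) (f : X → Y)
    (R01 RP : ℝ≥0∞)
    (hR01 : R01 = ∑' z : X × Y, if f z.1 ≠ z.2 then D z else 0)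
    (hRP : RP = ∑' w : Fin M → X × Y,
        (∏ i, D (w i)) *
          (if σ (fun i => f (w i).1) ≠ σ (fun i => (w i).2) then 1 else 0))
    (hden : ((c : ℝ≥0∞) ^ (2 * M - 2) * RP) ^ ((M : ℝ)⁻¹) < 1) :
    R01 ≤ min
      ((RP * (c : ℝ≥0∞) ^ (2 * I - 2)
          / (1 - ((c : ℝ≥0∞) ^ (2 * M - 2) * RP) ^ ((M : ℝ)⁻¹)) ^ (M - I)) ^ ((I : ℝ)⁻¹))
      (((c : ℝ≥0∞) ^ (2 * M - 2) * RP) ^ ((M : ℝ)⁻¹)) := by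
  subst hc
  rw [← zeroOneRisk_labelPrediction] at hR01
  rw [← partialRisk_labelPrediction] at hRP
  subst hR01 hRP
  set q := labelPrediction D f
  set B := ((Fintype.card Y : ℝ≥0∞) ^ (2 * M - 2) * partialRisk q σ) ^ ((M : ℝ)⁻¹)
  have hRB : zeroOneRisk q ≤ B := by
    rw [ENNReal.le_rpow_inv_iff (Nat.cast_pos.2 hM), ENNReal.rpow_natCast]
    exact zeroOneRisk_pow_le_partialRisk q σ hM hσM
  refine le_min ?_ hRB
  have hB0 : (1 - B) ^ (M - I) ≠ 0 := pow_ne_zero _ (tsub_pos_of_lt hden).ne'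
  have hBtop : (1 - B) ^ (M - I) ≠ ∞ := ENNReal.pow_ne_top (ENNReal.sub_ne_top ENNReal.one_ne_top)
  rw [ENNReal.le_rpow_inv_iff (Nat.cast_pos.2 hI), ENNReal.rpow_natCast,
    ENNReal.le_div_iff_mul_le (Or.inl hB0) (Or.inl hBtop), mul_comm _ (_ ^ (2 * I - 2))]
  calc zeroOneRisk q ^ I * (1 - B) ^ (M - I)
      ≤ zeroOneRisk q ^ I * (1 - zeroOneRisk q) ^ (M - I) := by gcongr
    _ ≤ _ := zeroOneRisk_pow_mul_le_partialRisk q σ hI hσI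

/-- If `σ` is both `I`-unambiguous and `M`-unambiguous, then `R⁰¹(f)` is bounded
by the minimum of `(R_P c^(2I−2) / (1 − (c^(2M−2) R_P)^(1/M))^(M−I))^(1/I)` and
`(c^(2M−2) R_P)^(1/M)`. -/
theorem stmt4 {X Y S : Type*} [Fintype Y] [DecidableEq Y] [DecidableEq S]
    (c M I : ℕ) (hc : Fintype.card Y = c) (hM : 1 ≤ M) (hI : 1 ≤ I) (hIM : I ≤ M)
    (σ : (Fin M → Y) → S)
    (hσM : ∀ y y' : Y, y ≠ y' → σ (fun _ => y) ≠ σ (fun _ => y'))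
    (hσI : ∃ Isub : Finset (Fin M), Isub.card = I ∧
      ∀ (y : Fin M → Y) (l l' : Y), (∀ i ∈ Isub, y i = l) → l' ≠ l →
        σ (fun i => if i ∈ Isub then l' else y i) ≠ σ y)
    (D : PMF (X × Y)) (f : X → Y)
    (R01 RP : ℝ≥0∞)
    (hR01 : R01 = ∑' z : X × Y, if f z.1 ≠ z.2 then D z else 0)
    (hRP : RP = ∑' w : Fin M → X × Y,
        (∏ i, D (w i)) *
          (if σ (fun i => f (w i).1) ≠ σ (fun i => (w i).2) then 1 else 0))
    (hden : ((c : ℝ≥0∞) ^ (2 * M - 2) * RP) ^ ((M : ℝ)⁻¹) < 1) :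
    R01 ≤ min
      ((RP * (c : ℝ≥0∞) ^ (2 * I - 2)
          / (1 - ((c : ℝ≥0∞) ^ (2 * M - 2) * RP) ^ ((M : ℝ)⁻¹)) ^ (M - I)) ^ ((I : ℝ)⁻¹))
      (((c : ℝ≥0∞) ^ (2 * M - 2) * RP) ^ ((M : ℝ)⁻¹)) :=
  stmt4_general c M I hc hM hI σ hσM hσI D f R01 RP hR01 hRP hden
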